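/- arXiv:2209.11542 — 6 statements merged into one kernel-verified Lean document; each statement's English description precedes it below -/
import Mathlib

section
/- Let N ≥ 3, p = q > 1, and let (w₁, w₂) be a C¹ solution on an interval I ⊂ (0,∞) of the system w₁' = r^{(N-1)(1-q)}|w₂|^q, w₂' = r^{(N-1)(1-q)}|w₁|^q. Then the quantity |w₁|^q w₁ - |w₂|^q w₂ is constant on I. -/
/-!
Since `(|x|^q x)' = (q + 1) |x|^q`, along any solution of `w₁' = c |w₂|^q`, `w₂' = c |w₁|^q`
the derivative of `|w₁|^q w₁ - |w₂|^q w₂` is `(q + 1) c (|w₁|^q |w₂|^q - |w₂|^q |w₁|^q) = 0`,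
whatever the weight `c` (here `r^{(N-1)(1-q)}`); so it is constant on the interval.
-/

open Set

theorem hasDerivAt_abs_rpow_mul_self {q : ℝ} (hq : 1 < q) (x : ℝ) :
    HasDerivAt (fun x : ℝ => |x| ^ q * x) ((q + 1) * |x| ^ q) x := by
  have hsq : |x| ^ (q - 2) * (x * x) = |x| ^ q := by
    rw [← abs_mul_abs_self, ← sq, ← Real.rpow_two, ← Real.rpow_add' (abs_nonneg x) (by linarith),
      sub_add_cancel]
  refine ((hasDerivAt_abs_rpow x hq).mul (hasDerivAt_id x)).congr_deriv ?_
  simp only [id, mul_one]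
  linear_combination q * hsq

theorem IsOpen.abs_rpow_mul_self_sub_eq {s : Set ℝ} (hs : IsOpen s) (hs' : IsPreconnected s)
    {q : ℝ} (hq : 1 < q) {c w₁ w₂ : ℝ → ℝ}
    (hw₁ : ∀ r ∈ s, HasDerivAt w₁ (c r * |w₂ r| ^ q) r)
    (hw₂ : ∀ r ∈ s, HasDerivAt w₂ (c r * |w₁ r| ^ q) r) {x y : ℝ} (hx : x ∈ s) (hy : y ∈ s) :
    |w₁ x| ^ q * w₁ x - |w₂ x| ^ q * w₂ x = |w₁ y| ^ q * w₁ y - |w₂ y| ^ q * w₂ y := by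
  have hF : ∀ r ∈ s, HasDerivAt (fun r => |w₁ r| ^ q * w₁ r - |w₂ r| ^ q * w₂ r) 0 r := by
    intro r hr
    refine (((hasDerivAt_abs_rpow_mul_self hq (w₁ r)).comp r (hw₁ r hr)).sub
      ((hasDerivAt_abs_rpow_mul_self hq (w₂ r)).comp r (hw₂ r hr))).congr_deriv ?_
    ring
  exact hs.is_const_of_deriv_eq_zero hs'
    (fun r hr => (hF r hr).differentiableAt.differentiableWithinAt)
    (fun r hr => (hF r hr).deriv) hx hy

theorem stmt6_general (N q a b : ℝ) (hq : 1 < q)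
    (w1 w2 : ℝ → ℝ)
    (h1 : ContDiffOn ℝ 1 w1 (Set.Ioo a b)) (h2 : ContDiffOn ℝ 1 w2 (Set.Ioo a b))
    (hw1 : ∀ r ∈ Set.Ioo a b, deriv w1 r = r ^ ((N - 1) * (1 - q)) * |w2 r| ^ q)
    (hw2 : ∀ r ∈ Set.Ioo a b, deriv w2 r = r ^ ((N - 1) * (1 - q)) * |w1 r| ^ q) :
    ∀ r₁ ∈ Set.Ioo a b, ∀ r₂ ∈ Set.Ioo a b,
      |w1 r₁| ^ q * w1 r₁ - |w2 r₁| ^ q * w2 r₁ =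
      |w1 r₂| ^ q * w1 r₂ - |w2 r₂| ^ q * w2 r₂ := by
  have hasDerivAt_of_contDiffOn {w : ℝ → ℝ} (hw : ContDiffOn ℝ 1 w (Ioo a b)) {r : ℝ}
      (hr : r ∈ Ioo a b) : HasDerivAt w (deriv w r) r :=
    ((hw.differentiableOn one_ne_zero).differentiableAt (isOpen_Ioo.mem_nhds hr)).hasDerivAt
  intro r₁ hr₁ r₂ hr₂
  refine isOpen_Ioo.abs_rpow_mul_self_sub_eq isPreconnected_Ioo hq
    (c := fun r => r ^ ((N - 1) * (1 - q))) (fun r hr => ?_) (fun r hr => ?_) hr₁ hr₂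
  · exact hw1 r hr ▸ hasDerivAt_of_contDiffOn h1 hr
  · exact hw2 r hr ▸ hasDerivAt_of_contDiffOn h2 hr

/-- First integral for the first-order radial system with `p = q`:
`|w₁|^q w₁ - |w₂|^q w₂` is constant. -/
theorem stmt6 (N q a b : ℝ) (hN : 3 ≤ N) (hq : 1 < q) (hab : 0 ≤ a)
    (w1 w2 : ℝ → ℝ)
    (h1 : ContDiffOn ℝ 1 w1 (Set.Ioo a b)) (h2 : ContDiffOn ℝ 1 w2 (Set.Ioo a b))
    (hw1 : ∀ r ∈ Set.Ioo a b, deriv w1 r = r ^ ((N - 1) * (1 - q)) * |w2 r| ^ q)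
    (hw2 : ∀ r ∈ Set.Ioo a b, deriv w2 r = r ^ ((N - 1) * (1 - q)) * |w1 r| ^ q) :
    ∀ r₁ ∈ Set.Ioo a b, ∀ r₂ ∈ Set.Ioo a b,
      |w1 r₁| ^ q * w1 r₁ - |w2 r₁| ^ q * w2 r₁ =
      |w1 r₂| ^ q * w1 r₂ - |w2 r₂| ^ q * w2 r₂ :=
  stmt6_general N q a b hq w1 w2 h1 h2 hw1 hw2
end

section
/- Let N ≥ 3, p = q > 1 with q ≠ N/(N-1). There exists no C¹ solution (w₁,w₂) on all of (0,∞) of the system w₁' = r^{(N-1)(1-q)}|w₂|^q, w₂' = r^{(N-1)(1-q)}|w₁|^q with |w₁|^q w₁ - |w₂|^q w₂ ≡ C for some C ≠ 0. Consequently every radial solution of the Hamilton–Jacobi system with p = q on ℝ^N \ {0} satisfies u₁' ≡ u₂'. -/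
/-!
Put `J t = |t| ^ q * t` and `E = N - (N - 1) q ≠ 0`. The substitution `s = r ^ E / E`
(followed by `s ↦ -s`, `w ↦ -w` when `E < 0`) turns the weighted system into the autonomous
system `v₁' = |v₂| ^ q`, `v₂' = |v₁| ^ q` on an unbounded half-line, with the same first
integral up to sign. If `J v₁ - J v₂ = C > 0`, then `v₁ > v₂` and both are nondecreasing;
`v₁` must become positive (otherwise `|v₂| ^ (q + 1) ≥ C` makes `v₁` grow without bound), so
`v₂` grows linearly and becomes positive, after which `v₂' ≥ v₂ ^ q` with `q > 1` blows up
in finite time. For the Hamilton–Jacobi system the fluxes `-r ^ (N - 1) u_i'` solve the weighted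
system, so their first integral vanishes, and `J` is injective.
-/

open Set Real

noncomputable def signedPow (q t : ℝ) : ℝ := |t| ^ q * t

section SignedPow

variable {q : ℝ}

theorem signedPow_neg (t : ℝ) : signedPow q (-t) = -signedPow q t := by
  simp [signedPow]

theorem signedPow_strictMono (hq : 0 ≤ q) : StrictMono (signedPow q) := by
  refine strictMono_of_odd_strictMonoOn_nonneg signedPow_neg fun s hs t _ hst => ?_
  have ht : 0 < t := lt_of_le_of_lt hs hst
  rw [signedPow, signedPow, abs_of_nonneg hs, abs_of_pos ht]
  calc s ^ q * s ≤ t ^ q * s := by gcongr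
    _ < t ^ q * t := mul_lt_mul_of_pos_left hst (rpow_pos_of_pos ht q)

theorem hasDerivAt_signedPow (hq : 1 < q) (t : ℝ) :
    HasDerivAt (signedPow q) ((q + 1) * |t| ^ q) t := by
  have hsq : |t| ^ (q - 2) * (t * t) = |t| ^ q := by
    rw [← abs_mul_abs_self, ← sq, ← rpow_two, ← rpow_add' (abs_nonneg t) (by linarith),
      sub_add_cancel]
  exact ((hasDerivAt_abs_rpow t hq).mul (hasDerivAt_id' t)).congr_deriv
    (by linear_combination q * hsq)

end SignedPow

section Growth

variable {f f' : ℝ → ℝ} {a c : ℝ}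

theorem mul_sub_le_sub_of_le_hasDerivAt (hf : ∀ t ∈ Ioi a, HasDerivAt f (f' t) t)
    (hle : ∀ t ∈ Ioi a, c ≤ f' t) {s t : ℝ} (hs : s ∈ Ioi a) (hst : s ≤ t) :
    c * (t - s) ≤ f t - f s := by
  refine (convex_Ioi a).mul_sub_le_image_sub_of_le_deriv
    (fun t ht => (hf t ht).continuousAt.continuousWithinAt)
    (fun t ht => (hf t (interior_subset ht)).differentiableAt.differentiableWithinAt)
    (fun t ht => ?_) s hs t (lt_of_lt_of_le hs hst) hst
  rw [interior_Ioi] at ht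
  exact (hf t ht).deriv ▸ hle t ht

theorem monotoneOn_of_hasDerivAt_nonneg (hf : ∀ t ∈ Ioi a, HasDerivAt f (f' t) t)
    (hnonneg : ∀ t ∈ Ioi a, 0 ≤ f' t) : MonotoneOn f (Ioi a) := fun s hs t _ hst => by
  simpa using mul_sub_le_sub_of_le_hasDerivAt hf hnonneg hs hst

theorem exists_lt_of_pos_le_hasDerivAt (hc : 0 < c) (hf : ∀ t ∈ Ioi a, HasDerivAt f (f' t) t)
    (hle : ∀ t ∈ Ioi a, c ≤ f' t) (M : ℝ) : ∃ t ∈ Ioi a, M < f t := by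
  have hs : a + 1 ∈ Ioi a := lt_add_one a
  set t := a + 1 + (|M - f (a + 1)| + 1) / c
  have hst : a + 1 ≤ t := le_add_of_nonneg_right (by positivity)
  have hgrow := mul_sub_le_sub_of_le_hasDerivAt hf hle hs hst
  have hct : c * (t - (a + 1)) = |M - f (a + 1)| + 1 := by
    rw [add_sub_cancel_left, mul_div_cancel₀ _ hc.ne']
  exact ⟨t, lt_of_lt_of_le hs hst, by linarith [le_abs_self (M - f (a + 1))]⟩

theorem false_of_rpow_le_hasDerivAt {q : ℝ} (hq : 1 < q)
    (hf : ∀ t ∈ Ioi a, HasDerivAt f (f' t) t) (hpos : ∀ t ∈ Ioi a, 0 < f t)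
    (hle : ∀ t ∈ Ioi a, f t ^ q ≤ f' t) : False := by
  -- `f ^ (1 - q) / (1 - q)` is negative, but its derivative `f' / f ^ q` is at least `1`.
  have hderiv : ∀ t ∈ Ioi a, HasDerivAt (fun t => f t ^ (1 - q) / (1 - q)) (f' t / f t ^ q) t :=
    fun t ht => by
      refine (((hf t ht).rpow_const (Or.inl (hpos t ht).ne')).div_const _).congr_deriv ?_
      rw [show 1 - q - 1 = -q by ring, rpow_neg (hpos t ht).le]
      field_simp [show 1 - q ≠ 0 by linarith]
  obtain ⟨t, ht, hlt⟩ := exists_lt_of_pos_le_hasDerivAt one_pos hderiv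
    (fun t ht => (one_le_div₀ (rpow_pos_of_pos (hpos t ht) q)).2 (hle t ht)) 0
  exact (div_neg_of_pos_of_neg (rpow_pos_of_pos (hpos t ht) _) (by linarith)).not_gt hlt

end Growth

section Autonomous

variable {q a C : ℝ} {v₁ v₂ : ℝ → ℝ}

theorem exists_pos_of_autonomous (hq : 0 ≤ q)
    (hd₁ : ∀ t ∈ Ioi a, HasDerivAt v₁ (|v₂ t| ^ q) t)
    (hd₂ : ∀ t ∈ Ioi a, HasDerivAt v₂ (|v₁ t| ^ q) t)
    (hC : 0 < C) (hint : ∀ t ∈ Ioi a, signedPow q (v₁ t) - signedPow q (v₂ t) = C) :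
    ∃ t ∈ Ioi a, 0 < v₁ t := by
  by_contra! hneg
  have hs : a + 1 ∈ Ioi a := lt_add_one a
  have hsub : Ioi (a + 1) ⊆ Ioi a := Ioi_subset_Ioi hs.le
  have hmono₂ := monotoneOn_of_hasDerivAt_nonneg hd₂ fun t _ => by positivity
  have hlt : ∀ t ∈ Ioi a, v₂ t < 0 := fun t ht =>
    ((signedPow_strictMono hq).lt_iff_lt.1 (by linarith [hint t ht])).trans_le (hneg t ht)
  -- `|v₂| ^ (q + 1) = C - J v₁ ≥ C` while `|v₂|` is nonincreasing
  have hbound : ∀ t ∈ Ioi (a + 1), C / |v₂ (a + 1)| ≤ |v₂ t| ^ q := fun t ht => by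
    have ht' : t ∈ Ioi a := hsub ht
    have hJ₁ : signedPow q (v₁ t) ≤ 0 :=
      mul_nonpos_of_nonneg_of_nonpos (by positivity) (hneg t ht')
    have hJ₂ : signedPow q (v₂ t) = -(|v₂ t| ^ q * |v₂ t|) := by
      rw [signedPow, abs_of_neg (hlt t ht')]; ring
    have habs : |v₂ t| ≤ |v₂ (a + 1)| := by
      rw [abs_of_neg (hlt t ht'), abs_of_neg (hlt _ hs)]
      exact neg_le_neg (hmono₂ hs ht' ht.le)
    rw [div_le_iff₀ (abs_pos.2 (hlt _ hs).ne)]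
    calc C ≤ |v₂ t| ^ q * |v₂ t| := by linarith [hint t ht']
      _ ≤ |v₂ t| ^ q * |v₂ (a + 1)| := by gcongr
  obtain ⟨t, ht, hpos⟩ := exists_lt_of_pos_le_hasDerivAt
    (div_pos hC (abs_pos.2 (hlt _ hs).ne)) (fun t ht => hd₁ t (hsub ht)) hbound 0
  exact (hneg t (hsub ht)).not_gt hpos

theorem no_solution_autonomous_of_pos (hq : 1 < q)
    (hd₁ : ∀ t ∈ Ioi a, HasDerivAt v₁ (|v₂ t| ^ q) t)
    (hd₂ : ∀ t ∈ Ioi a, HasDerivAt v₂ (|v₁ t| ^ q) t)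
    (hC : 0 < C) (hint : ∀ t ∈ Ioi a, signedPow q (v₁ t) - signedPow q (v₂ t) = C) :
    False := by
  have hq₀ : 0 ≤ q := by linarith
  have hmono₁ := monotoneOn_of_hasDerivAt_nonneg hd₁ fun t _ => by positivity
  have hmono₂ := monotoneOn_of_hasDerivAt_nonneg hd₂ fun t _ => by positivity
  have hlt : ∀ t ∈ Ioi a, v₂ t < v₁ t := fun t ht =>
    (signedPow_strictMono hq₀).lt_iff_lt.1 (by linarith [hint t ht])
  obtain ⟨t₀, ht₀, hv₁⟩ := exists_pos_of_autonomous hq₀ hd₁ hd₂ hC hint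
  have hsub₀ : Ioi t₀ ⊆ Ioi a := Ioi_subset_Ioi ht₀.le
  obtain ⟨t₁, ht₁, hv₂⟩ := exists_lt_of_pos_le_hasDerivAt (rpow_pos_of_pos hv₁ q)
    (fun t ht => hd₂ t (hsub₀ ht))
    (fun t ht => by
      have hle := hmono₁ ht₀ (hsub₀ ht) ht.le
      rw [abs_of_pos (hv₁.trans_le hle)]
      exact rpow_le_rpow hv₁.le hle hq₀) 0
  have hsub₁ : Ioi t₁ ⊆ Ioi a := Ioi_subset_Ioi (hsub₀ ht₁).le
  have hpos : ∀ t ∈ Ioi t₁, 0 < v₂ t := fun t ht =>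
    hv₂.trans_le (hmono₂ (hsub₀ ht₁) (hsub₁ ht) ht.le)
  refine false_of_rpow_le_hasDerivAt hq (fun t ht => hd₂ t (hsub₁ ht)) hpos fun t ht => ?_
  exact rpow_le_rpow (hpos t ht).le ((hlt t (hsub₁ ht)).le.trans (le_abs_self _)) hq₀

theorem no_solution_autonomous (hq : 1 < q)
    (hd₁ : ∀ t ∈ Ioi a, HasDerivAt v₁ (|v₂ t| ^ q) t)
    (hd₂ : ∀ t ∈ Ioi a, HasDerivAt v₂ (|v₁ t| ^ q) t)
    (hC : C ≠ 0) (hint : ∀ t ∈ Ioi a, signedPow q (v₁ t) - signedPow q (v₂ t) = C) :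
    False := by
  rcases hC.lt_or_gt with hC | hC
  · exact no_solution_autonomous_of_pos hq hd₂ hd₁ (neg_pos.2 hC)
      fun t ht => by linarith [hint t ht]
  · exact no_solution_autonomous_of_pos hq hd₁ hd₂ hC hint

end Autonomous

theorem hasDerivAt_comp_mul_rpow_inv {w f : ℝ → ℝ} {E c s : ℝ} (hE : E ≠ 0)
    (hw : ∀ r ∈ Ioi 0, HasDerivAt w (r ^ (E - 1) * f r) r) (hcs : 0 < c * s) :
    HasDerivAt (fun s => w ((c * s) ^ E⁻¹)) (c / E * f ((c * s) ^ E⁻¹)) s := by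
  have hψ : HasDerivAt (fun x => (c * x) ^ E⁻¹) (c * 1 * E⁻¹ * (c * s) ^ (E⁻¹ - 1)) s :=
    ((hasDerivAt_id' s).const_mul c).rpow_const (Or.inl hcs.ne')
  have hcancel : ((c * s) ^ E⁻¹) ^ (E - 1) * (c * s) ^ (E⁻¹ - 1) = 1 := by
    rw [← rpow_mul hcs.le, ← rpow_add hcs,
      show E⁻¹ * (E - 1) + (E⁻¹ - 1) = 0 by field_simp; ring, rpow_zero]
  exact ((hw ((c * s) ^ E⁻¹) (rpow_pos_of_pos hcs _)).comp s hψ).congr_deriv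
    (by linear_combination c / E * f ((c * s) ^ E⁻¹) * hcancel)

theorem no_solution_weighted {q E C : ℝ} {w₁ w₂ : ℝ → ℝ} (hq : 1 < q) (hE : E ≠ 0)
    (hd₁ : ∀ r ∈ Ioi 0, HasDerivAt w₁ (r ^ (E - 1) * |w₂ r| ^ q) r)
    (hd₂ : ∀ r ∈ Ioi 0, HasDerivAt w₂ (r ^ (E - 1) * |w₁ r| ^ q) r)
    (hC : C ≠ 0) (hint : ∀ r ∈ Ioi 0, signedPow q (w₁ r) - signedPow q (w₂ r) = C) :
    False := by
  rcases hE.lt_or_gt with hE' | hE'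
  · -- `s ↦ (-E s) ^ (1 / E)` reverses orientation, so the signs of `w₁, w₂` are flipped.
    have hcs : ∀ s ∈ Ioi (0 : ℝ), 0 < -E * s := fun s hs => mul_pos (neg_pos.2 hE') hs
    refine no_solution_autonomous (a := 0) (C := -C) (v₁ := fun s => -w₁ ((-E * s) ^ E⁻¹))
      (v₂ := fun s => -w₂ ((-E * s) ^ E⁻¹)) hq (fun s hs => ?_) (fun s hs => ?_)
      (neg_ne_zero.2 hC) fun s hs => ?_
    · refine (hasDerivAt_comp_mul_rpow_inv hE hd₁ (hcs s hs)).neg.congr_deriv ?_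
      rw [abs_neg, neg_div, div_self hE, neg_one_mul, neg_neg]
    · refine (hasDerivAt_comp_mul_rpow_inv hE hd₂ (hcs s hs)).neg.congr_deriv ?_
      rw [abs_neg, neg_div, div_self hE, neg_one_mul, neg_neg]
    · rw [signedPow_neg, signedPow_neg, ← hint _ (rpow_pos_of_pos (hcs s hs) _)]
      ring
  · have hcs : ∀ s ∈ Ioi (0 : ℝ), 0 < E * s := fun s hs => mul_pos hE' hs
    refine no_solution_autonomous (a := 0) (C := C) (v₁ := fun s => w₁ ((E * s) ^ E⁻¹))
      (v₂ := fun s => w₂ ((E * s) ^ E⁻¹)) hq (fun s hs => ?_) (fun s hs => ?_) hC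
      fun s hs => hint _ (rpow_pos_of_pos (hcs s hs) _)
    · exact (hasDerivAt_comp_mul_rpow_inv hE hd₁ (hcs s hs)).congr_deriv
        (by rw [div_self hE, one_mul])
    · exact (hasDerivAt_comp_mul_rpow_inv hE hd₂ (hcs s hs)).congr_deriv
        (by rw [div_self hE, one_mul])

theorem exists_forall_signedPow_sub_signedPow_eq {q : ℝ} {S : Set ℝ} {g w₁ w₂ : ℝ → ℝ}
    (hq : 1 < q) (hS : IsOpen S) (hS' : IsPreconnected S)
    (hd₁ : ∀ r ∈ S, HasDerivAt w₁ (g r * |w₂ r| ^ q) r)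
    (hd₂ : ∀ r ∈ S, HasDerivAt w₂ (g r * |w₁ r| ^ q) r) :
    ∃ C, ∀ r ∈ S, signedPow q (w₁ r) - signedPow q (w₂ r) = C := by
  have hΦ : ∀ r ∈ S, HasDerivAt (fun r => signedPow q (w₁ r) - signedPow q (w₂ r)) 0 r :=
    fun r hr => (((hasDerivAt_signedPow hq _).comp r (hd₁ r hr)).sub
      ((hasDerivAt_signedPow hq _).comp r (hd₂ r hr))).congr_deriv (by ring)
  exact hS.exists_is_const_of_deriv_eq_zero hS'
    (fun r hr => (hΦ r hr).differentiableAt.differentiableWithinAt) fun r hr => (hΦ r hr).deriv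

noncomputable def radialFlux (N : ℝ) (u : ℝ → ℝ) (r : ℝ) : ℝ :=
  -(r ^ (N - 1) * deriv u r)

theorem hasDerivAt_radialFlux {N r u'' : ℝ} {u : ℝ → ℝ} (hr : 0 < r)
    (hu : HasDerivAt (deriv u) u'' r) :
    HasDerivAt (radialFlux N u) (-(r ^ (N - 1) * (u'' + (N - 1) / r * deriv u r))) r := by
  refine ((hasDerivAt_rpow_const (Or.inl hr.ne')).mul hu).neg.congr_deriv ?_
  rw [rpow_sub_one hr.ne']
  field_simp
  ring

theorem hasDerivAt_radialFlux_of_eq {N q r : ℝ} {u v : ℝ → ℝ} (hr : 0 < r)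
    (hu : HasDerivAt (deriv u) (deriv (deriv u) r) r)
    (heq : -(deriv (deriv u) r + (N - 1) / r * deriv u r) = |deriv v r| ^ q) :
    HasDerivAt (radialFlux N u) (r ^ ((N - 1) * (1 - q)) * |radialFlux N v r| ^ q) r := by
  have habs : |radialFlux N v r| ^ q = r ^ ((N - 1) * q) * |deriv v r| ^ q := by
    rw [radialFlux, abs_neg, abs_mul, abs_of_pos (rpow_pos_of_pos hr _),
      mul_rpow (rpow_nonneg hr.le _) (abs_nonneg _), ← rpow_mul hr.le]
  refine (hasDerivAt_radialFlux hr hu).congr_deriv ?_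
  rw [habs, ← mul_assoc, ← rpow_add hr, show (N - 1) * (1 - q) + (N - 1) * q = N - 1 by ring,
    ← heq]
  ring

theorem hasDerivAt_of_contDiffOn_Ioi {f : ℝ → ℝ} {n : WithTop ℕ∞} {a r : ℝ}
    (hf : ContDiffOn ℝ n f (Ioi a)) (hn : n ≠ 0) (hr : r ∈ Ioi a) :
    HasDerivAt f (deriv f r) r :=
  ((hf.contDiffAt (Ioi_mem_nhds hr)).differentiableAt hn).hasDerivAt

/-- For `p = q ≠ N/(N-1)` there is no global solution on `(0,∞)` of the first-order
radial system with nonzero first integral; consequently every radial solution of the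
Hamilton–Jacobi system with `p = q` on `ℝ^N \ {0}` satisfies `u₁' ≡ u₂'`. -/
theorem stmt8 (N q : ℝ) (hN : 3 ≤ N) (hq : 1 < q) (hqN : q ≠ N / (N - 1)) :
    (¬ ∃ (w1 w2 : ℝ → ℝ) (C : ℝ), C ≠ 0 ∧
      ContDiffOn ℝ 1 w1 (Set.Ioi 0) ∧ ContDiffOn ℝ 1 w2 (Set.Ioi 0) ∧
      (∀ r ∈ Set.Ioi (0:ℝ), deriv w1 r = r ^ ((N - 1) * (1 - q)) * |w2 r| ^ q) ∧
      (∀ r ∈ Set.Ioi (0:ℝ), deriv w2 r = r ^ ((N - 1) * (1 - q)) * |w1 r| ^ q) ∧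
      (∀ r ∈ Set.Ioi (0:ℝ), |w1 r| ^ q * w1 r - |w2 r| ^ q * w2 r = C))
    ∧
    (∀ u1 u2 : ℝ → ℝ, ContDiffOn ℝ 2 u1 (Set.Ioi 0) → ContDiffOn ℝ 2 u2 (Set.Ioi 0) →
      (∀ r ∈ Set.Ioi (0:ℝ),
        -(deriv (deriv u1) r + ((N - 1) / r) * deriv u1 r) = |deriv u2 r| ^ q) →
      (∀ r ∈ Set.Ioi (0:ℝ),
        -(deriv (deriv u2) r + ((N - 1) / r) * deriv u2 r) = |deriv u1 r| ^ q) →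
      ∀ r ∈ Set.Ioi (0:ℝ), deriv u1 r = deriv u2 r) := by
  have hE : N - (N - 1) * q ≠ 0 := fun h =>
    hqN (by rw [eq_div_iff (by linarith)]; linarith)
  have hexp : (N - 1) * (1 - q) = N - (N - 1) * q - 1 := by ring
  refine ⟨?_, fun u1 u2 hu1 hu2 heq1 heq2 r hr => ?_⟩
  · rintro ⟨w1, w2, C, hC, hw1, hw2, hd1, hd2, hint⟩
    refine no_solution_weighted hq hE (fun r hr => ?_) (fun r hr => ?_) hC hint
    · rw [← hexp, ← hd1 r hr]; exact hasDerivAt_of_contDiffOn_Ioi hw1 one_ne_zero hr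
    · rw [← hexp, ← hd2 r hr]; exact hasDerivAt_of_contDiffOn_Ioi hw2 one_ne_zero hr
  have hu1' := hu1.deriv_of_isOpen isOpen_Ioi (m := 1) (by norm_num)
  have hu2' := hu2.deriv_of_isOpen isOpen_Ioi (m := 1) (by norm_num)
  have hd1 := fun r hr => hasDerivAt_radialFlux_of_eq hr
    (hasDerivAt_of_contDiffOn_Ioi hu1' one_ne_zero hr) (heq1 r hr)
  have hd2 := fun r hr => hasDerivAt_radialFlux_of_eq hr
    (hasDerivAt_of_contDiffOn_Ioi hu2' one_ne_zero hr) (heq2 r hr)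
  obtain ⟨C, hC⟩ := exists_forall_signedPow_sub_signedPow_eq hq isOpen_Ioi isPreconnected_Ioi
    hd1 hd2
  obtain rfl : C = 0 := by
    by_contra hC0
    exact no_solution_weighted hq hE (hexp ▸ hd1) (hexp ▸ hd2) hC0 hC
  have hflux : radialFlux N u1 r = radialFlux N u2 r :=
    (signedPow_strictMono (by linarith)).injective (sub_eq_zero.1 (hC r hr))
  simpa [radialFlux, (rpow_pos_of_pos hr (N - 1)).ne'] using hflux
end

section
/- Let 𝐍 > 1, 𝐩 > 1, σ ∈ ℝ, 𝐪 > 𝐩 - 1 with σ = -𝐩(𝐍-1)/(𝐩-1) and 𝐩 ≠ 𝐍. Set d = ((𝐩-1)(𝐪-𝐩+1)/(𝐩(𝐩-𝐍))) · (𝐩/((𝐩-1)(𝐪+1)))^{1/𝐩}. Then for any c > 0, on any interval where c + d·r^{(𝐩-𝐍)/(𝐩-1)} > 0, the function w(r) = (c + d·r^{(𝐩-𝐍)/(𝐩-1)})^{-𝐩/(𝐪-𝐩+1)} satisfies -(|w'|^{𝐩-2}w')' - ((𝐍-1)/r)|w'|^{𝐩-2}w' = -r^σ w^𝐪. -/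
/-!
Write `U = c + d r^α` with `α = (p - N)/(p - 1)` and `w = U^(-m)` with `m = p/(q - p + 1)`.
Then `w' = -K r^(α-1) U^(-m-1)` with `K = m d α > 0`, so the flux is
`|w'|^(p-2) w' = -K^(p-1) r^(1-N) U^e` with `e = -(m + 1)(p - 1)`: the choice of `α` is exactly
what turns `r^((α-1)(p-1))` into `r^(1-N)`. Since the radial operator is
`-r^(1-N) (r^(N-1) · flux)'`, only the derivative of `U^e` survives, leaving
`K^(p-1) e d α r^(α-N) U^(e-1)`. Finally `α - N = σ`, `e - 1 = -m q`, and `d` is chosen so that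
`K^(p-1) e d α = -K^p (q + 1)(p - 1)/p = -1`.
-/

open Real Set

lemma hasDerivAt_const_add_mul_rpow_rpow {c d α μ s : ℝ} (hs : 0 < s)
    (hU : 0 < c + d * s ^ α) :
    HasDerivAt (fun t : ℝ => (c + d * t ^ α) ^ μ)
      (d * α * μ * s ^ (α - 1) * (c + d * s ^ α) ^ (μ - 1)) s := by
  convert (((hasDerivAt_rpow_const (p := α) (Or.inl hs.ne')).const_mul d).const_add c).rpow_const
    (p := μ) (Or.inl hU.ne') using 1
  ring

lemma abs_neg_rpow_mul_neg {x : ℝ} (hx : 0 < x) (t : ℝ) : |-x| ^ t * -x = -x ^ (t + 1) := by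
  rw [abs_neg, abs_of_pos hx, rpow_add_one hx.ne']
  ring

section Profile

variable {c d α m : ℝ}

lemma deriv_profile {s : ℝ} (hs : 0 < s) (hU : 0 < c + d * s ^ α) :
    deriv (fun t : ℝ => (c + d * t ^ α) ^ (-m)) s
      = -(m * d * α * (s ^ (α - 1) * (c + d * s ^ α) ^ (-m - 1))) := by
  rw [hasDerivAt_const_add_mul_rpow_rpow hs hU |>.deriv]
  ring

lemma flux_profile (p : ℝ) (hK : 0 < m * d * α) {s : ℝ} (hs : 0 < s)
    (hU : 0 < c + d * s ^ α) :
    |deriv (fun t : ℝ => (c + d * t ^ α) ^ (-m)) s| ^ (p - 2) *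
        deriv (fun t : ℝ => (c + d * t ^ α) ^ (-m)) s
      = -((m * d * α) ^ (p - 1) *
          (s ^ ((α - 1) * (p - 1)) * (c + d * s ^ α) ^ ((-m - 1) * (p - 1)))) := by
  rw [deriv_profile hs hU, abs_neg_rpow_mul_neg (by positivity), show p - 2 + 1 = p - 1 by ring,
    mul_rpow (x := m * d * α) hK.le (by positivity),
    mul_rpow (x := s ^ (α - 1)) (by positivity) (by positivity),
    ← rpow_mul hs.le, ← rpow_mul hU.le]

lemma radial_pLaplacian_profile {N p a b : ℝ} (hα : (α - 1) * (p - 1) = 1 - N)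
    (hK : 0 < m * d * α) (ha : 0 ≤ a) (hU : ∀ s ∈ Ioo a b, 0 < c + d * s ^ α)
    {r : ℝ} (hr : r ∈ Ioo a b) :
    let w : ℝ → ℝ := fun t => (c + d * t ^ α) ^ (-m);
    -(deriv (fun s : ℝ => |deriv w s| ^ (p - 2) * deriv w s) r)
        - ((N - 1) / r) * (|deriv w r| ^ (p - 2) * deriv w r)
      = (m * d * α) ^ (p - 1) * ((-m - 1) * (p - 1)) * (d * α) * r ^ (α - N)
          * (c + d * r ^ α) ^ ((-m - 1) * (p - 1) - 1) := by
  intro w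
  have hr0 : 0 < r := ha.trans_lt hr.1
  have hflux : (fun s : ℝ => |deriv w s| ^ (p - 2) * deriv w s)
      =ᶠ[nhds r] fun s =>
        -((m * d * α) ^ (p - 1) * (s ^ (1 - N) * (c + d * s ^ α) ^ ((-m - 1) * (p - 1)))) := by
    filter_upwards [Ioo_mem_nhds hr.1 hr.2] with s hs
    rw [flux_profile p hK (ha.trans_lt hs.1) (hU s hs), hα]
  have hderiv : HasDerivAt
      (fun s : ℝ =>
        -((m * d * α) ^ (p - 1) * (s ^ (1 - N) * (c + d * s ^ α) ^ ((-m - 1) * (p - 1)))))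
      (-((m * d * α) ^ (p - 1) *
        ((1 - N) * r ^ (1 - N - 1) * (c + d * r ^ α) ^ ((-m - 1) * (p - 1))
        + r ^ (1 - N) * (d * α * ((-m - 1) * (p - 1)) * r ^ (α - 1)
          * (c + d * r ^ α) ^ ((-m - 1) * (p - 1) - 1))))) r :=
    (((hasDerivAt_rpow_const (Or.inl hr0.ne')).mul
      (hasDerivAt_const_add_mul_rpow_rpow hr0 (hU r hr))).const_mul _).neg
  rw [hflux.deriv_eq, hderiv.deriv, flux_profile p hK hr0 (hU r hr), hα,
    show α - N = (1 - N) + (α - 1) by ring, show (1 : ℝ) - N - 1 = (1 - N) + (-1) by ring,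
    rpow_add hr0, rpow_add hr0, rpow_neg_one, rpow_sub_one (hU r hr).ne']
  field_simp
  ring

end Profile

section Constants

variable {N p q : ℝ}

lemma profile_mul_d_mul_α (hp : 1 < p) (hq : p - 1 < q) (hpN : p ≠ N) (K : ℝ) :
    p / (q - p + 1) * ((p - 1) * (q - p + 1) / (p * (p - N)) * K) * ((p - N) / (p - 1)) = K := by
  have hp1 : p - 1 ≠ 0 := by linarith
  have hqp : q - p + 1 ≠ 0 := by linarith
  have hpN' : p - N ≠ 0 := sub_ne_zero.mpr hpN
  field_simp

lemma profile_coeff_eq_neg_one (hp : 1 < p) (hq : p - 1 < q) (hpN : p ≠ N) :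
    let K := (p / ((p - 1) * (q + 1))) ^ (1 / p)
    K ^ (p - 1) * ((-(p / (q - p + 1)) - 1) * (p - 1))
        * ((p - 1) * (q - p + 1) / (p * (p - N)) * K * ((p - N) / (p - 1))) = -1 := by
  intro K
  have hp1 : p - 1 ≠ 0 := by linarith
  have hqp : q - p + 1 ≠ 0 := by linarith
  have hq1 : q + 1 ≠ 0 := by linarith
  have hpN' : p - N ≠ 0 := sub_ne_zero.mpr hpN
  have hX : 0 < p / ((p - 1) * (q + 1)) := by apply div_pos <;> nlinarith
  have hK : 0 < K := rpow_pos_of_pos hX _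
  have hKp : K ^ p = p / ((p - 1) * (q + 1)) := by
    rw [show K = _ ^ p⁻¹ by rw [← one_div], rpow_inv_rpow hX.le (by linarith)]
  rw [rpow_sub_one hK.ne', hKp]
  field_simp
  ring

end Constants

theorem stmt9_general (NN p σ q c : ℝ) (hp : 1 < p) (hq : p - 1 < q)
    (hσ : σ = -p * (NN - 1) / (p - 1)) (hpN : p ≠ NN) :
    let d := ((p - 1) * (q - p + 1) / (p * (p - NN))) * (p / ((p - 1) * (q + 1))) ^ (1 / p)
    let w : ℝ → ℝ := fun r => (c + d * r ^ ((p - NN) / (p - 1))) ^ (-(p / (q - p + 1)))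
    ∀ a b : ℝ, 0 < a →
      (∀ r ∈ Set.Ioo a b, 0 < c + d * r ^ ((p - NN) / (p - 1))) →
      ∀ r ∈ Set.Ioo a b,
        -(deriv (fun s : ℝ => |deriv w s| ^ (p - 2) * deriv w s) r)
            - ((NN - 1) / r) * (|deriv w r| ^ (p - 2) * deriv w r)
          = -(r ^ σ * w r ^ q) := by
  intro d w a b ha hU r hr
  set K := (p / ((p - 1) * (q + 1))) ^ (1 / p)
  have hK : 0 < K := rpow_pos_of_pos (by apply div_pos <;> nlinarith) _
  have hmdα : p / (q - p + 1) * d * ((p - NN) / (p - 1)) = K := profile_mul_d_mul_α hp hq hpN K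
  have hexp_r : (p - NN) / (p - 1) - NN = σ := by
    rw [hσ]; field_simp [show p - 1 ≠ 0 by linarith]; ring
  have hexp_U : (-(p / (q - p + 1)) - 1) * (p - 1) - 1 = -(p / (q - p + 1)) * q := by
    field_simp [show q - p + 1 ≠ 0 by linarith]; ring
  rw [radial_pLaplacian_profile (by field_simp [show p - 1 ≠ 0 by linarith]; ring)
      (hmdα ▸ hK) ha.le hU hr, hmdα, profile_coeff_eq_neg_one hp hq hpN, hexp_r, hexp_U,
    ← rpow_mul (hU r hr).le]
  ring

/-- Explicit solutions of the radial `𝐩`-Laplace Hardy–Hénon equation with absorption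
in generalized dimension `𝐍` when `σ = -𝐩(𝐍-1)/(𝐩-1)` and `𝐩 ≠ 𝐍`. -/
theorem stmt9 (NN p σ q c : ℝ) (hN : 1 < NN) (hp : 1 < p) (hq : p - 1 < q)
    (hσ : σ = -p * (NN - 1) / (p - 1)) (hpN : p ≠ NN) (hc : 0 < c) :
    let d := ((p - 1) * (q - p + 1) / (p * (p - NN))) * (p / ((p - 1) * (q + 1))) ^ (1 / p)
    let w : ℝ → ℝ := fun r => (c + d * r ^ ((p - NN) / (p - 1))) ^ (-(p / (q - p + 1)))
    ∀ a b : ℝ, 0 < a →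
      (∀ r ∈ Set.Ioo a b, 0 < c + d * r ^ ((p - NN) / (p - 1))) →
      ∀ r ∈ Set.Ioo a b,
        -(deriv (fun s : ℝ => |deriv w s| ^ (p - 2) * deriv w s) r)
            - ((NN - 1) / r) * (|deriv w r| ^ (p - 2) * deriv w r)
          = -(r ^ σ * w r ^ q) :=
  stmt9_general NN p σ q c hp hq hσ hpN
end

section
/- Let 𝐍 = 𝐩 > 1 and 𝐪 > 𝐍 - 1. Set d = ((𝐪-𝐍+1)/𝐍)·(𝐍/((𝐍-1)(𝐪+1)))^{1/𝐍}. Then for any C ∈ ℝ, on any interval of (0,∞) where C + d·ln r > 0, the function w(r) = (C + d·ln r)^{-𝐍/(𝐪-𝐍+1)} satisfies -(|w'|^{𝐍-2}w')' - ((𝐍-1)/r)|w'|^{𝐍-2}w' = -r^{-𝐍} w^𝐪. -/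
/-!
Write `u = C + d log r` and `w = u^(-α)` with `α = N/(q - N + 1)`. The flux `|w'|^(N-2) w'` is
`r^(1-N)` times a power of `u`, and the radial operator is in divergence form,
`φ' + (N-1)/r φ = r^(1-N) (r^(N-1) φ)'`, so only the logarithm is differentiated. This gives
`-(αd)^(N-1)(α+1)(N-1)d · r^(-N) u^(-αq)`, and `d` is exactly the constant making the
coefficient equal to `1`.
-/

open Real Set Filter Topology

lemma deriv_add_sub_one_div_mul_eq_rpow_mul {N r Ψ' : ℝ} {φ Ψ : ℝ → ℝ} (hr : r ≠ 0)
    (hφ : φ =ᶠ[𝓝 r] fun s => s ^ (1 - N) * Ψ s) (hΨ : HasDerivAt Ψ Ψ' r) :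
    deriv φ r + (N - 1) / r * φ r = r ^ (1 - N) * Ψ' := by
  have hderiv : HasDerivAt (fun s => s ^ (1 - N) * Ψ s)
      ((1 - N) * r ^ (1 - N - 1) * Ψ r + r ^ (1 - N) * Ψ') r :=
    (hasDerivAt_rpow_const (Or.inl hr)).mul hΨ
  rw [hφ.deriv_eq, hderiv.deriv, hφ.eq_of_nhds, rpow_sub_one hr]
  field_simp
  ring

lemma hasDerivAt_affine_log_rpow {C d γ r : ℝ} (hr : r ≠ 0) (hu : C + d * log r ≠ 0) :
    HasDerivAt (fun s => (C + d * log s) ^ γ)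
      (γ * d * r⁻¹ * (C + d * log r) ^ (γ - 1)) r := by
  have hlog : HasDerivAt (fun s => C + d * log s) (d * r⁻¹) r :=
    ((hasDerivAt_log hr).const_mul d).const_add C
  exact (hlog.rpow_const (Or.inl hu)).congr_deriv (by ring)

lemma abs_rpow_sub_two_mul_of_neg {x : ℝ} (N : ℝ) (hx : x < 0) :
    |x| ^ (N - 2) * x = -(-x) ^ (N - 1) := by
  rw [abs_of_neg hx, show N - 1 = N - 2 + 1 by ring, rpow_add_one (neg_ne_zero.mpr hx.ne)]
  ring

section LogPower

variable {N α C d : ℝ}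

lemma flux_affine_log_rpow_neg {s : ℝ} (hαd : 0 < α * d) (hs : 0 < s)
    (hu : 0 < C + d * log s) :
    |deriv (fun s => (C + d * log s) ^ (-α)) s| ^ (N - 2)
        * deriv (fun s => (C + d * log s) ^ (-α)) s
      = s ^ (1 - N) * (-(α * d) ^ (N - 1) * (C + d * log s) ^ ((-α - 1) * (N - 1))) := by
  set u := C + d * log s
  have hpos : 0 < α * d * s⁻¹ * u ^ (-α - 1) := by positivity
  have hw := (hasDerivAt_affine_log_rpow (γ := -α) hs.ne' hu.ne').deriv
  rw [hw, show -α * d * s⁻¹ * u ^ (-α - 1) = -(α * d * s⁻¹ * u ^ (-α - 1)) by ring,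
    abs_rpow_sub_two_mul_of_neg N (neg_neg_of_pos hpos), neg_neg,
    mul_rpow (by positivity) (by positivity), mul_rpow hαd.le (by positivity),
    inv_rpow hs.le, ← rpow_neg hs.le, ← rpow_mul hu.le, neg_sub]
  ring

lemma radial_operator_affine_log_rpow_neg {r : ℝ} (hαd : 0 < α * d) (hr : 0 < r)
    (hu : ∀ᶠ s in 𝓝 r, 0 < C + d * log s) :
    -deriv (fun s => |deriv (fun s => (C + d * log s) ^ (-α)) s| ^ (N - 2)
        * deriv (fun s => (C + d * log s) ^ (-α)) s) r
      - (N - 1) / r * (|deriv (fun s => (C + d * log s) ^ (-α)) r| ^ (N - 2)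
        * deriv (fun s => (C + d * log s) ^ (-α)) r)
      = -((α * d) ^ (N - 1) * (α + 1) * (N - 1) * d * r ^ (-N)
        * (C + d * log r) ^ ((-α - 1) * (N - 1) - 1)) := by
  set β := (-α - 1) * (N - 1)
  have hflux : (fun s => |deriv (fun s => (C + d * log s) ^ (-α)) s| ^ (N - 2)
        * deriv (fun s => (C + d * log s) ^ (-α)) s)
      =ᶠ[𝓝 r] fun s => s ^ (1 - N) * (-(α * d) ^ (N - 1) * (C + d * log s) ^ β) := by
    filter_upwards [hu, lt_mem_nhds hr] with s hus hs
    exact flux_affine_log_rpow_neg hαd hs hus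
  have hΨ := (hasDerivAt_affine_log_rpow (γ := β) hr.ne' hu.self_of_nhds.ne').const_mul
    (-(α * d) ^ (N - 1))
  rw [sub_eq_neg_add, ← neg_add, add_comm,
    deriv_add_sub_one_div_mul_eq_rpow_mul hr.ne' hflux hΨ,
    show -N = 1 - N - 1 by ring, rpow_sub_one hr.ne']
  field_simp
  ring

end LogPower

lemma hardy_constant_mul_eq_one {N q : ℝ} (hN : 1 < N) (hq : N - 1 < q) :
    let α := N / (q - N + 1)
    let d := ((q - N + 1) / N) * (N / ((N - 1) * (q + 1))) ^ (1 / N)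
    (α * d) ^ (N - 1) * (α + 1) * (N - 1) * d = 1 := by
  intro α d
  have hqN : 0 < q - N + 1 := by linarith
  have hk : 0 < N / ((N - 1) * (q + 1)) := by
    apply div_pos <;> nlinarith
  have hαd : α * d = (N / ((N - 1) * (q + 1))) ^ (1 / N) := by
    simp only [α, d]
    field_simp
  have hpow : (α * d) ^ (N - 1) * (α * d) = N / ((N - 1) * (q + 1)) := by
    rw [← rpow_add_one (by rw [hαd]; positivity), sub_add_cancel, hαd, ← rpow_mul hk.le,
      one_div_mul_cancel (by linarith), rpow_one]
  have hα : α ≠ 0 := div_ne_zero (by linarith) hqN.ne'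
  have hN1 : N - 1 ≠ 0 := by linarith
  have hq1 : q + 1 ≠ 0 := by linarith
  calc (α * d) ^ (N - 1) * (α + 1) * (N - 1) * d
      = (α * d) ^ (N - 1) * (α * d) * ((α + 1) * (N - 1) / α) := by field_simp
    _ = 1 := by
      rw [hpow]
      simp only [α]
      field_simp
      ring

/-- Explicit logarithmic solutions of the radial `𝐍`-Laplace equation with absorption
and Hardy weight `r^(-𝐍)` in the limit case `𝐩 = 𝐍 = -σ`. -/
theorem stmt10 (NN q C : ℝ) (hN : 1 < NN) (hq : NN - 1 < q) :
    let d := ((q - NN + 1) / NN) * (NN / ((NN - 1) * (q + 1))) ^ (1 / NN)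
    let w : ℝ → ℝ := fun r => (C + d * Real.log r) ^ (-(NN / (q - NN + 1)))
    ∀ a b : ℝ, 0 < a →
      (∀ r ∈ Set.Ioo a b, 0 < C + d * Real.log r) →
      ∀ r ∈ Set.Ioo a b,
        -(deriv (fun s : ℝ => |deriv w s| ^ (NN - 2) * deriv w s) r)
            - ((NN - 1) / r) * (|deriv w r| ^ (NN - 2) * deriv w r)
          = -(r ^ (-NN) * w r ^ q) := by
  intro d w a b ha hpos r hr
  set α := NN / (q - NN + 1)
  have hqN : 0 < q - NN + 1 := by linarith
  have hαd : 0 < α * d := by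
    have : 0 < NN / ((NN - 1) * (q + 1)) := by apply div_pos <;> nlinarith
    positivity
  have hu : ∀ᶠ s in 𝓝 r, 0 < C + d * log s :=
    eventually_of_mem (isOpen_Ioo.mem_nhds hr) hpos
  rw [radial_operator_affine_log_rpow_neg hαd (ha.trans hr.1) hu,
    hardy_constant_mul_eq_one hN hq, one_mul, ← rpow_mul (hpos r hr).le]
  congr 3
  simp only [α]
  field_simp
  ring
end

section
/- Let 𝐍 > 𝐩 > 1, σ > -𝐩, 𝐪 = 𝐪_S := (𝐍(𝐩-1) + 𝐩 + 𝐩σ)/(𝐍-𝐩). For c > 0 set d = c^{𝐪-𝐩+1}(𝐍+σ)^{-1}((𝐍-𝐩)/(𝐩-1))^{1-𝐩}. Then w(r) = c·(d + r^{(𝐩+σ)/(𝐩-1)})^{-(𝐍-𝐩)/(𝐩+σ)} is positive on (0,∞) and satisfies -(|w'|^{𝐩-2}w')' - ((𝐍-1)/r)|w'|^{𝐩-2}w' = r^σ w^𝐪 for all r > 0. -/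
/-!
Write `α = (p + σ)/(p - 1)`, `X = d + r^α` and `w = c X^γ` with `γ = -(N - p)/(p + σ)`.
Then `w' = -K r^(α-1) X^(γ-1)` with `K = c (N - p)/(p - 1)`, so the `p`-flux `|w'|^(p-2) w'` is
`-K^(p-1) r^(σ+1) X^(-(N+σ)/α)`. For a flux of exactly this shape the radial operator
`-Φ' - (N-1)/r Φ` collapses to `K^(p-1) (N+σ) d r^σ X^(-(N+σ)/α - 1)`: the two terms carrying
`r^α` cancel. At `q = q_S` the exponent `-(N+σ)/α - 1` equals `γ q`, and `d` is chosen so that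
`K^(p-1) (N+σ) d = c^q`.
-/

open Real Filter Topology

lemma hasDerivAt_mul_add_rpow_rpow (c d α γ : ℝ) {s : ℝ} (hd : 0 ≤ d) (hs : 0 < s) :
    HasDerivAt (fun x : ℝ => c * (d + x ^ α) ^ γ)
      (c * γ * α * (s ^ (α - 1) * (d + s ^ α) ^ (γ - 1))) s := by
  have hX : d + s ^ α ≠ 0 := by positivity
  exact ((((hasDerivAt_rpow_const (p := α) (Or.inl hs.ne')).const_add d).rpow_const
    (p := γ) (Or.inl hX)).const_mul c).congr_deriv (by ring)

lemma abs_rpow_sub_two_mul_neg {y : ℝ} (hy : 0 < y) (p : ℝ) :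
    |-y| ^ (p - 2) * -y = -y ^ (p - 1) := by
  rw [abs_neg, abs_of_pos hy, mul_neg, ← rpow_add_one hy.ne']
  ring_nf

lemma abs_rpow_sub_two_mul_neg_profile {K d α γ p s : ℝ} (hK : 0 < K) (hd : 0 ≤ d) (hs : 0 < s) :
    |-(K * (s ^ (α - 1) * (d + s ^ α) ^ (γ - 1)))| ^ (p - 2) *
        -(K * (s ^ (α - 1) * (d + s ^ α) ^ (γ - 1)))
      = -(K ^ (p - 1) * (s ^ ((α - 1) * (p - 1)) * (d + s ^ α) ^ ((γ - 1) * (p - 1)))) := by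
  have hX : 0 < d + s ^ α := by positivity
  rw [abs_rpow_sub_two_mul_neg (by positivity), mul_rpow hK.le (by positivity),
    mul_rpow (by positivity) (by positivity), ← rpow_mul hs.le, ← rpow_mul hX.le]

lemma hasDerivAt_neg_mul_rpow_mul_add_rpow_rpow (A d α γ σ : ℝ) {r : ℝ} (hd : 0 ≤ d)
    (hr : 0 < r) :
    HasDerivAt (fun s : ℝ => -(A * (s ^ (σ + 1) * (d + s ^ α) ^ γ)))
      (-(A * ((σ + 1) * r ^ σ * (d + r ^ α) ^ γ
        + r ^ (σ + 1) * (α * r ^ (α - 1) * γ * (d + r ^ α) ^ (γ - 1))))) r := by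
  have hX : d + r ^ α ≠ 0 := by positivity
  have hpow := hasDerivAt_rpow_const (p := σ + 1) (Or.inl hr.ne')
  rw [add_sub_cancel_right] at hpow
  exact ((hpow.mul (((hasDerivAt_rpow_const (p := α) (Or.inl hr.ne')).const_add d).rpow_const
    (p := γ) (Or.inl hX))).const_mul A).neg

lemma neg_deriv_sub_radial_flux (A d α N σ : ℝ) {r : ℝ} (hd : 0 ≤ d) (hα : α ≠ 0)
    (hr : 0 < r) :
    -deriv (fun s : ℝ => -(A * (s ^ (σ + 1) * (d + s ^ α) ^ (-(N + σ) / α)))) r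
        - (N - 1) / r * -(A * (r ^ (σ + 1) * (d + r ^ α) ^ (-(N + σ) / α)))
      = A * (N + σ) * d * r ^ σ * (d + r ^ α) ^ (-(N + σ) / α - 1) := by
  have hX : 0 < d + r ^ α := by positivity
  rw [(hasDerivAt_neg_mul_rpow_mul_add_rpow_rpow A d α _ σ hd hr).deriv,
    rpow_add_one hr.ne', rpow_sub_one hr.ne', rpow_sub_one hX.ne']
  field_simp
  ring

lemma criticalExponent_identities {N p σ : ℝ} (hp : p ≠ 1) (hpσ : p + σ ≠ 0) (hNp : N ≠ p) :
    let α := (p + σ) / (p - 1)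
    let γ := -(N - p) / (p + σ)
    γ * α = -((N - p) / (p - 1)) ∧ (α - 1) * (p - 1) = σ + 1 ∧
      (γ - 1) * (p - 1) = -(N + σ) / α ∧
      γ * ((N * (p - 1) + p + p * σ) / (N - p)) = -(N + σ) / α - 1 := by
  have : p - 1 ≠ 0 := sub_ne_zero.2 hp
  have : N - p ≠ 0 := sub_ne_zero.2 hNp
  refine ⟨?_, ?_, ?_, ?_⟩ <;> field_simp <;> ring

lemma mul_rpow_mul_mul_rpow_sub_mul_inv_mul_rpow_neg {a b m q e : ℝ} (ha : 0 < a) (hb : 0 < b)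
    (hm : m ≠ 0) : (a * b) ^ e * m * (a ^ (q - e) * m⁻¹ * b ^ (-e)) = a ^ q := by
  rw [mul_rpow ha.le hb.le, rpow_sub ha, rpow_neg hb.le]
  field_simp

/-- The explicit ground states of the radial `𝐩`-Laplace Hardy–Hénon equation with
source at the critical Sobolev exponent `𝐪_S`, in generalized dimension `𝐍 > 𝐩 > -σ`. -/
theorem stmt11 (NN p σ c : ℝ) (hp : 1 < p) (hNp : p < NN) (hσ : -p < σ) (hc : 0 < c) :
    let qS := (NN * (p - 1) + p + p * σ) / (NN - p)
    let d := c ^ (qS - p + 1) * (NN + σ)⁻¹ * ((NN - p) / (p - 1)) ^ (1 - p)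
    let w : ℝ → ℝ := fun r => c * (d + r ^ ((p + σ) / (p - 1))) ^ (-(NN - p) / (p + σ))
    ∀ r > (0:ℝ), 0 < w r ∧
      -(deriv (fun s : ℝ => |deriv w s| ^ (p - 2) * deriv w s) r)
          - ((NN - 1) / r) * (|deriv w r| ^ (p - 2) * deriv w r)
        = r ^ σ * w r ^ qS := by
  intro qS d w r hr
  obtain ⟨hγα, hα₁, hγ₁, hγq⟩ :=
    criticalExponent_identities hp.ne' (by linarith : 0 < p + σ).ne' hNp.ne'
  have hp1 : 0 < p - 1 := by linarith
  have hR : 0 < (NN - p) / (p - 1) := div_pos (by linarith) hp1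
  set α := (p + σ) / (p - 1)
  set γ := -(NN - p) / (p + σ)
  set K := c * ((NN - p) / (p - 1)) with hK
  have hKpos : 0 < K := by positivity
  have hd : 0 < d := mul_pos (mul_pos (by positivity) (inv_pos.2 (by linarith))) (by positivity)
  have hX : 0 < d + r ^ α := add_pos_of_pos_of_nonneg hd (rpow_nonneg hr.le _)
  have hw' : ∀ s > 0, deriv w s = -(K * (s ^ (α - 1) * (d + s ^ α) ^ (γ - 1))) := fun s hs => by
    have hcoef : c * γ * α = -K := by rw [mul_assoc, hγα, hK, mul_neg]
    have : HasDerivAt w _ s := hasDerivAt_mul_add_rpow_rpow c d α γ hd.le hs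
    rw [this.deriv, hcoef, neg_mul]
  have hflux : (fun s => |deriv w s| ^ (p - 2) * deriv w s) =ᶠ[𝓝 r]
      fun s => -(K ^ (p - 1) * (s ^ (σ + 1) * (d + s ^ α) ^ (-(NN + σ) / α))) := by
    filter_upwards [Ioi_mem_nhds hr] with s hs
    rw [hw' s hs, abs_rpow_sub_two_mul_neg_profile hKpos hd.le hs, hα₁, hγ₁]
  have hcoef : K ^ (p - 1) * (NN + σ) * d = c ^ qS := by
    simp only [d, hK]
    rw [show qS - p + 1 = qS - (p - 1) by ring, show 1 - p = -(p - 1) by ring]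
    exact mul_rpow_mul_mul_rpow_sub_mul_inv_mul_rpow_neg hc hR (by linarith)
  refine ⟨mul_pos hc (rpow_pos_of_pos hX _), ?_⟩
  rw [hflux.deriv_eq, hflux.eq_of_nhds, neg_deriv_sub_radial_flux _ _ _ _ _ hd.le
    (div_pos (by linarith) hp1).ne' hr, hcoef, ← hγq]
  simp only [w]
  rw [mul_rpow hc.le (rpow_pos_of_pos hX _).le, ← rpow_mul hX.le]
  ring
end

section
/- Let N ≥ 3 and q* = (2N+p)/(2(N-1)p - 1) with p > N/(N-1), so that (N-1)p q* = N + (p+q*)/2. Given c > 0, set b = (c((N-1)p - N))^{1/p} and d = (c^{pq*-1}/((N-1)p - N))^{1/p} · 1/(N - (N-1)q*). Then the pair u₁'(r) = c r^{1-N}(d + r^{(p-q*)/2})^{2(N-(N-1)p)/(p-q*)}, u₂'(r) = -b r^{1-(N-1)q*}(d + r^{(p-q*)/2})^{2((N-1)q*-N)/(p-q*)} satisfies the radial system -(u₁'' + ((N-1)/r)u₁') = |u₂'|^p, -(u₂'' + ((N-1)/r)u₂') = |u₁'|^q* on (0,∞), provided q₁ < q* (so that N - (N-1)q* relevant signs hold)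 and p ≠ q*. -/
/-!
For `v(r) = k r^a (d + r^α)^β` the radial operator `v' + (N-1) v / r` equals
`k r^(a-1) (d + r^α)^(β-1) ((a + N - 1)(d + r^α) + α β r^α)`.
For `u₁'` (`a = 1 - N`) only the second term survives; for `u₂'` (`a = 1 - (N-1)q`,
`αβ = -(N - (N-1)q)`) the two terms collapse to `(N - (N-1)q) d`. The critical relation
`(N-1) p q = N + (p+q)/2` makes the exponents of `r` and of `d + r^α` on both sides agree, and
`b`, `d` are chosen so that `b^p = c((N-1)p - N)` and `b d (N - (N-1)q) = c^q` match the constants.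
-/

open Real

theorem deriv_mul_rpow_mul_add_rpow_add_div_mul {k d a α β N r : ℝ} (hr : 0 < r)
    (hG : d + r ^ α ≠ 0) :
    deriv (fun s => k * s ^ a * (d + s ^ α) ^ β) r
        + (N - 1) / r * (k * r ^ a * (d + r ^ α) ^ β)
      = k * r ^ (a - 1) * (d + r ^ α) ^ (β - 1)
        * ((a + N - 1) * (d + r ^ α) + α * β * r ^ α) := by
  have hpow (x : ℝ) : HasDerivAt (fun s : ℝ => s ^ x) (x * r ^ (x - 1)) r :=
    hasDerivAt_rpow_const (Or.inl hr.ne')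
  have hv : HasDerivAt (fun s => k * s ^ a * (d + s ^ α) ^ β)
      (k * (a * r ^ (a - 1) * (d + r ^ α) ^ β
        + r ^ a * (α * r ^ (α - 1) * β * (d + r ^ α) ^ (β - 1)))) r := by
    simpa only [mul_assoc] using
      ((hpow a).fun_mul (((hpow α).const_add d).rpow_const (p := β) (Or.inl hG))).const_mul k
  rw [hv.deriv]
  have hr_sub (x : ℝ) : r ^ (x - 1) = r ^ x / r := by rw [rpow_sub hr, rpow_one]
  have hG_split : (d + r ^ α) ^ β = (d + r ^ α) ^ (β - 1) * (d + r ^ α) := by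
    rw [← rpow_add_one hG]; ring_nf
  rw [hr_sub, hr_sub, hG_split]
  field_simp
  ring

section
variable {N p q : ℝ}

theorem critical_exponent_mul_p (hcrit : (N - 1) * p * q = N + (p + q) / 2) (hpq : p ≠ q) :
    2 * ((N - 1) * q - N) / (p - q) * p = 2 * (N - (N - 1) * p) / (p - q) - 1 := by
  have : p - q ≠ 0 := sub_ne_zero.mpr hpq
  field_simp
  linear_combination 2 * hcrit

theorem critical_exponent_mul_q (hcrit : (N - 1) * p * q = N + (p + q) / 2) (hpq : p ≠ q) :
    2 * (N - (N - 1) * p) / (p - q) * q = 2 * ((N - 1) * q - N) / (p - q) - 1 := by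
  have : p - q ≠ 0 := sub_ne_zero.mpr hpq
  field_simp
  linear_combination -2 * hcrit

end

theorem mul_rpow_mul_rpow_rpow {k r G a β p : ℝ} (hk : 0 ≤ k) (hr : 0 ≤ r) (hG : 0 ≤ G) :
    (k * r ^ a * G ^ β) ^ p = k ^ p * r ^ (a * p) * G ^ (β * p) := by
  rw [mul_rpow (by positivity) (by positivity), mul_rpow hk (by positivity), ← rpow_mul hr,
    ← rpow_mul hG]

theorem radial_system_solution {N p q b c d : ℝ} (hcrit : (N - 1) * p * q = N + (p + q) / 2)
    (hpq : p ≠ q) (hb : 0 ≤ b) (hc : 0 ≤ c) (hd : 0 ≤ d)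
    (hbp : b ^ p = c * ((N - 1) * p - N)) (hcq : c ^ q = b * d * (N - (N - 1) * q)) :
    let v1 : ℝ → ℝ := fun r =>
      c * r ^ (1 - N) * (d + r ^ ((p - q) / 2)) ^ (2 * (N - (N - 1) * p) / (p - q))
    let v2 : ℝ → ℝ := fun r =>
      -(b * r ^ (1 - (N - 1) * q) * (d + r ^ ((p - q) / 2)) ^ (2 * ((N - 1) * q - N) / (p - q)))
    ∀ r > (0:ℝ),
      -(deriv v1 r + ((N - 1) / r) * v1 r) = |v2 r| ^ p ∧
      -(deriv v2 r + ((N - 1) / r) * v2 r) = |v1 r| ^ q := by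
  intro v1 v2 r hr
  have hG : 0 < d + r ^ ((p - q) / 2) := by positivity
  constructor
  · rw [abs_neg, abs_of_nonneg (by positivity), mul_rpow_mul_rpow_rpow hb hr.le hG.le, hbp,
      critical_exponent_mul_p hcrit hpq,
      show (1 - (N - 1) * q) * p = (p - q) / 2 + (1 - N - 1) by linear_combination -hcrit,
      rpow_add hr]
    simp only [v1]
    rw [deriv_mul_rpow_mul_add_rpow_add_div_mul hr hG.ne']
    field_simp
    ring
  · have hv2 : v2 = fun s => -b * s ^ (1 - (N - 1) * q)
        * (d + s ^ ((p - q) / 2)) ^ (2 * ((N - 1) * q - N) / (p - q)) := by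
      funext s; ring
    rw [abs_of_nonneg (by positivity), mul_rpow_mul_rpow_rpow hc hr.le hG.le, hcq,
      critical_exponent_mul_q hcrit hpq,
      show (1 - N) * q = 1 - (N - 1) * q - 1 by ring]
    rw [hv2]; beta_reduce
    rw [deriv_mul_rpow_mul_add_rpow_add_div_mul hr hG.ne']
    field_simp
    ring

theorem stmt19_general (N p c : ℝ) (hN : 3 ≤ N) (hp : N / (N - 1) < p) (hc : 0 < c)
    (hpq : p ≠ (2 * N + p) / (2 * (N - 1) * p - 1)) :
    let qs := (2 * N + p) / (2 * (N - 1) * p - 1)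
    let b := (c * ((N - 1) * p - N)) ^ (1 / p)
    let d := (c ^ (p * qs - 1) / ((N - 1) * p - N)) ^ (1 / p) * (1 / (N - (N - 1) * qs))
    let v1 : ℝ → ℝ := fun r =>
      c * r ^ (1 - N) * (d + r ^ ((p - qs) / 2)) ^ (2 * (N - (N - 1) * p) / (p - qs))
    let v2 : ℝ → ℝ := fun r =>
      -(b * r ^ (1 - (N - 1) * qs) * (d + r ^ ((p - qs) / 2)) ^ (2 * ((N - 1) * qs - N) / (p - qs)))
    ∀ r > (0:ℝ),
      -(deriv v1 r + ((N - 1) / r) * v1 r) = |v2 r| ^ p ∧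
      -(deriv v2 r + ((N - 1) / r) * v2 r) = |v1 r| ^ qs := by
  intro qs b d
  have hN1 : 0 < N - 1 := by linarith
  have hM : 0 < (N - 1) * p - N := by nlinarith [(div_lt_iff₀ hN1).mp hp]
  have hp0 : p ≠ 0 := by nlinarith
  have hden : 0 < 2 * (N - 1) * p - 1 := by nlinarith
  have hcrit : (N - 1) * p * qs = N + (p + qs) / 2 := by
    have hqs : qs * (2 * (N - 1) * p - 1) = 2 * N + p := div_mul_cancel₀ _ hden.ne'
    linear_combination hqs / 2
  have hL : 0 < N - (N - 1) * qs := by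
    simp only [qs]; rw [sub_pos, ← mul_div_assoc, div_lt_iff₀ hden]; nlinarith
  have hbp : b ^ p = c * ((N - 1) * p - N) := by
    simp only [b]; rw [one_div, rpow_inv_rpow (by positivity) hp0]
  have hprod :
      c * ((N - 1) * p - N) * (c ^ (p * qs - 1) / ((N - 1) * p - N)) = c ^ (p * qs) := by
    rw [rpow_sub_one hc.ne']; field_simp
  have hcq : c ^ qs = b * d * (N - (N - 1) * qs) :=
    calc c ^ qs = (c ^ (p * qs)) ^ (1 / p) := by rw [← rpow_mul hc.le]; field_simp
      _ = b * d * (N - (N - 1) * qs) := by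
        simp only [b, d]; rw [← hprod, mul_rpow (by positivity) (by positivity)]; field_simp
  exact radial_system_solution hcrit hpq (by positivity) hc.le (by positivity) hbp hcq

/-- Explicit solutions of the radial Hamilton–Jacobi system at the critical Sobolev
exponent `q* = (2N+p)/(2(N-1)p - 1)`. -/
theorem stmt19 (N p c : ℝ) (hN : 3 ≤ N) (hp : N / (N - 1) < p) (hc : 0 < c)
    (hq1 : N / ((N - 1) * p - 1) < (2 * N + p) / (2 * (N - 1) * p - 1))
    (hpq : p ≠ (2 * N + p) / (2 * (N - 1) * p - 1)) :
    let qs := (2 * N + p) / (2 * (N - 1) * p - 1)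
    let b := (c * ((N - 1) * p - N)) ^ (1 / p)
    let d := (c ^ (p * qs - 1) / ((N - 1) * p - N)) ^ (1 / p) * (1 / (N - (N - 1) * qs))
    let v1 : ℝ → ℝ := fun r =>
      c * r ^ (1 - N) * (d + r ^ ((p - qs) / 2)) ^ (2 * (N - (N - 1) * p) / (p - qs))
    let v2 : ℝ → ℝ := fun r =>
      -(b * r ^ (1 - (N - 1) * qs) * (d + r ^ ((p - qs) / 2)) ^ (2 * ((N - 1) * qs - N) / (p - qs)))
    ∀ r > (0:ℝ),
      -(deriv v1 r + ((N - 1) / r) * v1 r) = |v2 r| ^ p ∧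
      -(deriv v2 r + ((N - 1) / r) * v2 r) = |v1 r| ^ qs :=
  stmt19_general N p c hN hp hc hpq
end
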